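/- arXiv:2509.10613 — 3 statements merged into one kernel-verified Lean document; each statement's English description precedes it below -/
import Mathlib

section
/- Let x : [t₀, t_L] → ℝ^d be the piecewise linear path interpolating points x₀, x₁, …, x_L ∈ ℝ^d at times t₀ < t₁ < ⋯ < t_L, and write Δx^ℓ = x_ℓ − x_{ℓ−1}. Then for every n ≥ 0, the level-n signature of x satisfies S(x)^{(n)} = Σ_{k₁+⋯+k_L = n} (Δx¹)^{⊗k₁}/k₁! ⊗ (Δx²)^{⊗k₂}/k₂! ⊗ ⋯ ⊗ (Δx^L)^{⊗k_L}/k_L!, where the sum is over all tuples of non-negative integers (k₁,…,k_L) summing to n. Equivalently, the signature of a piecewise linear path is the tensor product of the tensor exponentials of its increments: S(x) = exp(Δx¹) ⊗ ⋯ ⊗ exp(Δx^L). -/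
open MeasureTheory

/-- Coordinates (in the standard tensor basis, i.e. indexed by words over the
alphabet `Fin d`) of the iterated-integral signature of a path `x` over the
interval `[a, b]`.  `sigCoord x b w a` is the coordinate indexed by the word
`w` of the signature of `x` over `[a, b]`:
`∫_{a < t₁ < ⋯ < t_k < b} x'_{w₁}(t₁) ⋯ x'_{w_k}(t_k)`.
The empty word gives the level-0 signature `1`. -/
noncomputable def sigCoord {d : ℕ} (x : ℝ → Fin d → ℝ) (b : ℝ) :
    List (Fin d) → ℝ → ℝ
  | [], _ => 1
  | i :: w, a => ∫ u in a..b, deriv (fun s => x s i) u * sigCoord x b w u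

/-!
On a piece `[a, c]` where `x` is linear with increment `Δ`, Chen's identity reads
`S(x)_{[s,b]} = exp(((c - s) / (c - a)) • Δ) ⊗ S(x)_{[c,b]}` for `s ∈ [a, c]`. Coordinatewise this
follows by induction on the word: `x'` is the constant `Δ / (c - a)` on `(a, c)`, and integrating
`((c - u) / (c - a)) ^ j / j!` against it raises `j` by one. At `s = a` the factor is `exp Δ`, so
peeling off the pieces from the right end gives `S(x)_{[t₀,t_L]} = exp Δx¹ ⊗ ⋯ ⊗ exp Δx^L`, whose
coordinates expand into the sum over the compositions `(k₁, …, k_L)` of the word length.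
-/

open Finset Set

section TensorExp

variable {𝕜 ι : Type*} [Field 𝕜]

/-- The coordinates of `exp (τ • v) ⊗ g` in the tensor algebra over `ι → 𝕜` (coordinates are
indexed by words over `ι`), where `g` is given by its coordinates. -/
def expSmulMul (v : ι → 𝕜) (τ : 𝕜) (g : List ι → 𝕜) (w : List ι) : 𝕜 :=
  ∑ j ∈ range (w.length + 1), τ ^ j / j.factorial * ((w.take j).map v).prod * g (w.drop j)

/-- The coordinates of `exp v₁ ⊗ ⋯ ⊗ exp v_L`. -/
def expProd : List (ι → 𝕜) → List ι → 𝕜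
  | [], w => if w = [] then 1 else 0
  | v :: vs, w => expSmulMul v 1 (expProd vs) w

theorem expSmulMul_cons (v : ι → 𝕜) (τ : 𝕜) (g : List ι → 𝕜) (i : ι) (w : List ι) :
    expSmulMul v τ g (i :: w) = g (i :: w) + ∑ j ∈ range (w.length + 1),
      τ ^ (j + 1) / (j + 1).factorial * (v i * ((w.take j).map v).prod) * g (w.drop j) := by
  rw [expSmulMul, List.length_cons, sum_range_succ', add_comm]
  simp

@[fun_prop]
theorem continuous_expSmulMul [TopologicalSpace 𝕜] [IsTopologicalRing 𝕜] (v : ι → 𝕜)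
    (g : List ι → 𝕜) (w : List ι) : Continuous fun τ => expSmulMul v τ g w := by
  unfold expSmulMul
  fun_prop

theorem Finset.Nat.sum_antidiagonalTuple_succ {M : Type*} [AddCommMonoid M] (L n : ℕ)
    (f : (Fin (L + 1) → ℕ) → M) :
    ∑ k ∈ Nat.antidiagonalTuple (L + 1) n, f k =
      ∑ j ∈ range (n + 1), ∑ k ∈ Nat.antidiagonalTuple L (n - j), f (Fin.cons j k) := by
  rw [sum_sigma']
  refine sum_nbij' (fun k => ⟨k 0, Fin.tail k⟩) (fun p => Fin.cons p.1 p.2) ?_ ?_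
    (fun k _ => Fin.cons_self_tail k) (fun p _ => by simp) (fun k _ => by rw [Fin.cons_self_tail])
  · intro k hk
    simp only [mem_sigma, mem_range, Nat.mem_antidiagonalTuple, Fin.sum_univ_succ] at hk ⊢
    exact ⟨by omega, by simp only [Fin.tail]; omega⟩
  · rintro ⟨j, k⟩ hjk
    simp only [mem_sigma, mem_range, Nat.mem_antidiagonalTuple, Fin.sum_univ_succ,
      Fin.cons_zero, Fin.cons_succ] at hjk ⊢
    omega

theorem expProd_ofFn {L : ℕ} (v : Fin L → ι → 𝕜) (w : List ι) :
    expProd (List.ofFn v) w =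
      ∑ k ∈ Nat.antidiagonalTuple L w.length, ∏ ℓ : Fin L,
        (((w.drop (∑ m ∈ univ.filter (· < ℓ), k m)).take (k ℓ)).map (v ℓ)).prod /
          (k ℓ).factorial := by
  induction L generalizing w with
  | zero => cases w <;> simp [expProd]
  | succ L ih =>
    have offset_succ (j : ℕ) (k : Fin L → ℕ) (m : Fin L) :
        ∑ p ∈ univ.filter (· < m.succ), (Fin.cons j k : Fin (L + 1) → ℕ) p =
          j + ∑ p ∈ univ.filter (· < m), k p := by
      simp [sum_filter, Fin.sum_univ_succ, Fin.succ_lt_succ_iff, Fin.succ_pos]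
    rw [List.ofFn_succ, expProd, expSmulMul, Nat.sum_antidiagonalTuple_succ]
    refine sum_congr rfl fun j _ => ?_
    rw [ih, List.length_drop, mul_sum]
    refine sum_congr rfl fun k _ => ?_
    simp only [Fin.prod_univ_succ, offset_succ, Fin.cons_zero, Fin.cons_succ, ← List.drop_drop]
    simp [div_eq_mul_inv, mul_assoc, mul_comm]

end TensorExp

theorem integral_sub_div_pow (a c s : ℝ) (j : ℕ) :
    ∫ u in s..c, ((c - u) / (c - a)) ^ j / (c - a) = ((c - s) / (c - a)) ^ (j + 1) / (j + 1) := by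
  have hderiv (u : ℝ) : HasDerivAt (fun u => ((c - u) / (c - a)) ^ (j + 1) / -(j + 1))
      (((c - u) / (c - a)) ^ j / (c - a)) u := by
    refine ((((hasDerivAt_id' u).const_sub c).div_const (c - a)).pow (j + 1)).div_const
      (-((j : ℝ) + 1)) |>.congr_deriv ?_
    rw [Nat.add_sub_cancel]
    push_cast
    field_simp
  rw [intervalIntegral.integral_eq_sub_of_hasDerivAt (fun u _ => hderiv u)
    (by apply Continuous.intervalIntegrable; fun_prop)]
  simp only [sub_self, zero_div, zero_pow j.succ_ne_zero, div_neg]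
  ring

theorem integral_mul_expSmulMul_sub_div {ι : Type*} (v : ι → ℝ) (g : List ι → ℝ)
    (w : List ι) (r a c s : ℝ) :
    ∫ u in s..c, r / (c - a) * expSmulMul v ((c - u) / (c - a)) g w =
      ∑ j ∈ range (w.length + 1),
        ((c - s) / (c - a)) ^ (j + 1) / (j + 1).factorial * (r * ((w.take j).map v).prod) *
          g (w.drop j) := by
  simp only [expSmulMul, mul_sum]
  rw [intervalIntegral.integral_finsetSum fun j _ => by
    apply Continuous.intervalIntegrable; fun_prop]
  refine sum_congr rfl fun j _ => ?_
  have hterm : (fun u => r / (c - a) * (((c - u) / (c - a)) ^ j / j.factorial *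
      ((w.take j).map v).prod * g (w.drop j))) = fun u =>
        (r * ((w.take j).map v).prod * g (w.drop j) / j.factorial) *
          (((c - u) / (c - a)) ^ j / (c - a)) := by
    ext u; ring
  rw [hterm, intervalIntegral.integral_const_mul, integral_sub_div_pow, Nat.factorial_succ]
  push_cast
  field_simp

section LinearSegment

def IsLinearOn {E : Type*} [AddCommGroup E] [Module ℝ E] (x : ℝ → E) (a c : ℝ) (p q : E) :
    Prop :=
  ∀ s ∈ Icc a c, x s = p + ((s - a) / (c - a)) • (q - p)

variable {d : ℕ} {x : ℝ → Fin d → ℝ} {a c b : ℝ} {p q : Fin d → ℝ}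

theorem IsLinearOn.deriv_apply (hx : IsLinearOn x a c p q) (i : Fin d) {u : ℝ}
    (hu : u ∈ Ioo a c) : deriv (fun s => x s i) u = (q - p) i / (c - a) := by
  have hline : (fun s => x s i) =ᶠ[nhds u] fun s => p i + (s - a) / (c - a) * (q - p) i := by
    filter_upwards [Ioo_mem_nhds hu.1 hu.2] with s hs
    simp [hx s (Ioo_subset_Icc_self hs)]
  rw [hline.deriv_eq, ((((hasDerivAt_id' u).sub_const a).div_const (c - a)).mul_const
    ((q - p) i)).const_add (p i) |>.deriv]
  ring

theorem IsLinearOn.eqOn_deriv_mul_sigCoord (hx : IsLinearOn x a c p q) (i : Fin d)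
    (w : List (Fin d)) {φ : ℝ → ℝ} (hφ : EqOn (sigCoord x b w) φ (Icc a c)) {s : ℝ}
    (hs : s ∈ Icc a c) :
    EqOn (fun u => deriv (fun r => x r i) u * sigCoord x b w u)
      (fun u => (q - p) i / (c - a) * φ u) (uIoo s c) := fun u hu => by
  rw [uIoo_of_le hs.2] at hu
  have hu' : u ∈ Ioo a c := ⟨hs.1.trans_lt hu.1, hu.2⟩
  simp only [hx.deriv_apply i hu', hφ (Ioo_subset_Icc_self hu')]

theorem IsLinearOn.sigCoord_eq_expSmulMul (hx : IsLinearOn x a c p q)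
    (hint : ∀ w i, IntervalIntegrable (fun u => deriv (fun r => x r i) u * sigCoord x b w u)
      volume c b)
    (w : List (Fin d)) {s : ℝ} (hs : s ∈ Icc a c) :
    sigCoord x b w s = expSmulMul (q - p) ((c - s) / (c - a)) (sigCoord x b · c) w := by
  induction w generalizing s with
  | nil => simp [sigCoord, expSmulMul]
  | cons i w ih =>
    have hφ : Continuous fun u => expSmulMul (q - p) ((c - u) / (c - a)) (sigCoord x b · c) w :=
      by fun_prop
    have heq := hx.eqOn_deriv_mul_sigCoord i w (fun u hu => ih hu) hs
    have hint_sc := ((continuous_const.mul hφ).intervalIntegrable (μ := volume) s c).congr_uIoo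
      heq.symm
    rw [sigCoord, ← intervalIntegral.integral_add_adjacent_intervals hint_sc (hint w i),
      intervalIntegral.integral_congr_uIoo heq, integral_mul_expSmulMul_sub_div,
      expSmulMul_cons, add_comm]
    rfl

theorem IsLinearOn.intervalIntegrable_deriv_mul_sigCoord (hx : IsLinearOn x a c p q)
    (hac : a ≤ c)
    (hint : ∀ w i, IntervalIntegrable (fun u => deriv (fun r => x r i) u * sigCoord x b w u)
      volume c b)
    (w : List (Fin d)) (i : Fin d) :
    IntervalIntegrable (fun u => deriv (fun r => x r i) u * sigCoord x b w u) volume a b := by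
  have hφ : Continuous fun u => expSmulMul (q - p) ((c - u) / (c - a)) (sigCoord x b · c) w := by
    fun_prop
  have heq := hx.eqOn_deriv_mul_sigCoord i w (fun u hu => hx.sigCoord_eq_expSmulMul hint w hu)
    (left_mem_Icc.mpr hac)
  exact (((continuous_const.mul hφ).intervalIntegrable a c).congr_uIoo heq.symm).trans (hint w i)

end LinearSegment

section PiecewiseLinear

variable {d L : ℕ} {t : Fin (L + 1) → ℝ} {X : Fin (L + 1) → Fin d → ℝ} {x : ℝ → Fin d → ℝ}

theorem intervalIntegrable_deriv_mul_sigCoord_of_piecewiseLinear (ht : Monotone t)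
    (hx : ∀ ℓ : Fin L, IsLinearOn x (t ℓ.castSucc) (t ℓ.succ) (X ℓ.castSucc) (X ℓ.succ))
    (ℓ : Fin (L + 1)) (w : List (Fin d)) (i : Fin d) :
    IntervalIntegrable (fun u => deriv (fun r => x r i) u * sigCoord x (t (Fin.last L)) w u)
      volume (t ℓ) (t (Fin.last L)) := by
  induction ℓ using Fin.reverseInduction generalizing w i with
  | last => exact .refl
  | cast ℓ ih =>
    exact (hx ℓ).intervalIntegrable_deriv_mul_sigCoord (ht (Fin.castSucc_le_succ ℓ)) ih w i

theorem sigCoord_eq_expProd_of_piecewiseLinear (ht : StrictMono t)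
    (hx : ∀ ℓ : Fin L, IsLinearOn x (t ℓ.castSucc) (t ℓ.succ) (X ℓ.castSucc) (X ℓ.succ))
    (ℓ : Fin (L + 1)) :
    (sigCoord x (t (Fin.last L)) · (t ℓ)) =
      expProd ((List.ofFn fun m : Fin L => X m.succ - X m.castSucc).drop ℓ) := by
  induction ℓ using Fin.reverseInduction with
  | last =>
    ext (_ | ⟨i, w⟩) <;> simp [sigCoord, expProd, List.drop_eq_nil_of_le]
  | cast ℓ ih =>
    have hlt : t ℓ.castSucc < t ℓ.succ := ht Fin.castSucc_lt_succ
    ext w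
    rw [List.drop_eq_getElem_cons (by simp), expProd]
    rw [(hx ℓ).sigCoord_eq_expSmulMul
      (intervalIntegrable_deriv_mul_sigCoord_of_piecewiseLinear ht.monotone hx ℓ.succ) w
      (left_mem_Icc.mpr hlt.le), div_self (sub_ne_zero.mpr hlt.ne'), ih]
    simp

end PiecewiseLinear

/-- The signature of a piecewise linear path is the tensor product of the
tensor exponentials of its increments: if `x` is the piecewise linear path
interpolating the points `X 0, X 1, …, X L` at times `t 0 < t 1 < ⋯ < t L`,
then for every `n ≥ 0`,
`S(x)^{(n)} = Σ_{k₁+⋯+k_L = n} (Δx¹)^{⊗k₁}/k₁! ⊗ ⋯ ⊗ (Δx^L)^{⊗k_L}/k_L!`,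
where `Δx^ℓ = X ℓ - X (ℓ-1)`.  In coordinates: the coordinate indexed by a word
`w` of length `n` is the sum, over all tuples `(k₁, …, k_L)` of non-negative
integers summing to `n`, of the product over `ℓ` of
`(∏_{i ∈ (ℓ-th chunk of w of length k_ℓ)} (Δx^ℓ)_i) / k_ℓ!`,
where the `ℓ`-th chunk starts at position `k₁ + ⋯ + k_{ℓ-1}`. -/
theorem signature_of_piecewise_linear_path {d L : ℕ}
    (t : Fin (L + 1) → ℝ) (ht : StrictMono t)
    (X : Fin (L + 1) → Fin d → ℝ) (x : ℝ → Fin d → ℝ)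
    (hx : ∀ ℓ : Fin L, ∀ s ∈ Set.Icc (t ℓ.castSucc) (t ℓ.succ),
      x s = X ℓ.castSucc +
        ((s - t ℓ.castSucc) / (t ℓ.succ - t ℓ.castSucc)) • (X ℓ.succ - X ℓ.castSucc)) :
    ∀ (n : ℕ) (w : List (Fin d)), w.length = n →
      sigCoord x (t (Fin.last L)) w (t 0) =
        ∑ k ∈ Finset.Nat.antidiagonalTuple L n,
          ∏ ℓ : Fin L,
            (((w.drop (∑ m ∈ Finset.univ.filter (· < ℓ), k m)).take (k ℓ)).map
                (fun i => (X ℓ.succ - X ℓ.castSucc) i)).prod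
              / (Nat.factorial (k ℓ)) := by
  rintro n w rfl
  have h := congrFun (sigCoord_eq_expProd_of_piecewiseLinear ht hx 0) w
  rw [Fin.val_zero, List.drop_zero, expProd_ofFn] at h
  exact h
end

section
/- (Reparameterisation invariance of the signature.) Let x : [a,b] → ℝ^d be a C¹ path and let φ : [c,d] → [a,b] be a C¹, strictly increasing bijection. Then for every k ≥ 0, S(x ∘ φ)^{(k)}_{[c,d]} = S(x)^{(k)}_{[a,b]}; that is, the signature represents paths up to reparameterisation. -/
open MeasureTheory

/-! The signature is invariant under monotone reparameterisation because each level is obtained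
from the previous one by integrating against `dx_i`, and the substitution `v = φ t` turns
`dx_i(v)` into `d(x_i ∘ φ)(t)`. Since `deriv` carries junk values at the endpoints of `[a, b]`,
the argument runs with the one-sided derivative `derivWithin · (Icc a b)`, which is continuous
on the closed interval and agrees with `deriv` on its interior. -/

open Set

section DerivWithinIcc

variable {F : Type*} [NormedAddCommGroup F] [NormedSpace ℝ F] {f : ℝ → F} {a b t : ℝ}

theorem ContDiffOn.hasDerivAt_derivWithin_Icc (hf : ContDiffOn ℝ 1 f (Icc a b))
    (ht : t ∈ Ioo a b) : HasDerivAt f (derivWithin f (Icc a b) t) t := by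
  have hnhds : Icc a b ∈ nhds t := Icc_mem_nhds ht.1 ht.2
  rw [derivWithin_of_mem_nhds hnhds]
  exact ((hf.differentiableOn one_ne_zero t (Ioo_subset_Icc_self ht)).differentiableAt
    hnhds).hasDerivAt

theorem ContDiffOn.continuousOn_derivWithin_Icc (hf : ContDiffOn ℝ 1 f (Icc a b)) :
    ContinuousOn (derivWithin f (Icc a b)) (Icc a b) := by
  rcases lt_or_ge a b with hab | hba
  · exact hf.continuousOn_derivWithin (uniqueDiffOn_Icc hab) le_rfl
  · exact (subsingleton_Icc_of_ge hba).continuousOn _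

theorem integral_derivWithin_smul_comp_Icc {φ : ℝ → ℝ} {g : ℝ → F} {u v : ℝ}
    (hφ : ContDiffOn ℝ 1 φ (Icc a b)) (hg : ContinuousOn g (φ '' Icc a b))
    (hu : u ∈ Icc a b) (hv : v ∈ Icc a b) :
    ∫ t in u..v, derivWithin φ (Icc a b) t • g (φ t) = ∫ s in φ u..φ v, g s := by
  have hsub : uIcc u v ⊆ Icc a b := uIcc_subset_Icc hu hv
  refine intervalIntegral.integral_deriv_smul_comp'' (hφ.continuousOn.mono hsub)
    (fun t ht => ?_) (hφ.continuousOn_derivWithin_Icc.mono hsub)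
    (hg.mono (image_mono hsub))
  exact (hφ.hasDerivAt_derivWithin_Icc (uIoo_subset_Ioo hu hv ht)).hasDerivWithinAt

end DerivWithinIcc

section Signature

variable {d : ℕ} {x : ℝ → Fin d → ℝ} {a b : ℝ}

theorem sigCoord_cons_eq_integral_derivWithin (i : Fin d) (w : List (Fin d)) {u : ℝ}
    (hu : u ∈ Icc a b) :
    sigCoord x b (i :: w) u =
      ∫ t in u..b, derivWithin (fun s => x s i) (Icc a b) t * sigCoord x b w t := by
  refine intervalIntegral.integral_congr_uIoo fun t ht => ?_
  rw [uIoo_of_le hu.2] at ht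
  rw [derivWithin_of_mem_nhds (Icc_mem_nhds (hu.1.trans_lt ht.1) ht.2)]

theorem continuousOn_sigCoord (hx : ContDiffOn ℝ 1 x (Icc a b)) (w : List (Fin d)) :
    ContinuousOn (sigCoord x b w) (Icc a b) := by
  rcases lt_or_ge b a with hba | hab
  · simp [Icc_eq_empty_of_lt hba]
  induction w with
  | nil => exact continuousOn_const
  | cons i w ih =>
    have hint : IntegrableOn
        (fun t => derivWithin (fun s => x s i) (Icc a b) t * sigCoord x b w t) (uIcc a b) := by
      rw [uIcc_of_le hab]
      exact ((contDiffOn_pi.mp hx i).continuousOn_derivWithin_Icc.mul ih).integrableOn_Icc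
    have hprim := intervalIntegral.continuousOn_primitive_interval_left hint
    rw [uIcc_of_le hab] at hprim
    exact hprim.congr fun u hu => sigCoord_cons_eq_integral_derivWithin i w hu

theorem sigCoord_comp_of_mapsTo {φ : ℝ → ℝ} {c e : ℝ} (hx : ContDiffOn ℝ 1 x (Icc a b))
    (hφ : ContDiffOn ℝ 1 φ (Icc c e)) (hmaps : MapsTo φ (Icc c e) (Icc a b))
    (hmapsIoo : MapsTo φ (Ioo c e) (Ioo a b)) (he : φ e = b) (w : List (Fin d)) :
    ∀ u ∈ Icc c e, sigCoord (fun t => x (φ t)) e w u = sigCoord x b w (φ u) := by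
  induction w with
  | nil => exact fun _ _ => rfl
  | cons i w ih =>
    intro u hu
    set g := fun v => derivWithin (fun s => x s i) (Icc a b) v * sigCoord x b w v
    have hxi : ContDiffOn ℝ 1 (fun s => x s i) (Icc a b) := contDiffOn_pi.mp hx i
    have hg : ContinuousOn g (Icc a b) :=
      hxi.continuousOn_derivWithin_Icc.mul (continuousOn_sigCoord hx w)
    have hintegrand : EqOn
        (fun t => deriv (fun s => x (φ s) i) t * sigCoord (fun t => x (φ t)) e w t)
        (fun t => derivWithin φ (Icc c e) t • g (φ t)) (uIoo u e) := by
      intro t ht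
      rw [uIoo_of_le hu.2] at ht
      have ht' : t ∈ Ioo c e := ⟨hu.1.trans_lt ht.1, ht.2⟩
      have hchain : HasDerivAt (fun s => x (φ s) i)
          (derivWithin (fun s => x s i) (Icc a b) (φ t) * derivWithin φ (Icc c e) t) t :=
        (hxi.hasDerivAt_derivWithin_Icc (hmapsIoo ht')).comp t (hφ.hasDerivAt_derivWithin_Icc ht')
      simp only [hchain.deriv, ih t (Ioo_subset_Icc_self ht'), g, smul_eq_mul]
      ring
    calc sigCoord (fun t => x (φ t)) e (i :: w) u
        = ∫ t in u..e, derivWithin φ (Icc c e) t • g (φ t) :=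
          intervalIntegral.integral_congr_uIoo hintegrand
      _ = ∫ v in φ u..b, g v := by
          rw [integral_derivWithin_smul_comp_Icc hφ (hg.mono hmaps.image_subset) hu
            (right_mem_Icc.mpr (hu.1.trans hu.2)), he]
      _ = sigCoord x b (i :: w) (φ u) :=
          (sigCoord_cons_eq_integral_derivWithin i w (hmaps hu)).symm

end Signature

section MonotoneEndpoints

variable {α β : Type*} [Preorder α] [PartialOrder β] {φ : α → β} {a b : β} {c e : α}

theorem MonotoneOn.apply_left_eq_of_surjOn (hmono : MonotoneOn φ (Icc c e))
    (hmaps : MapsTo φ (Icc c e) (Icc a b)) (hsurj : SurjOn φ (Icc c e) (Icc a b))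
    (hce : c ≤ e) : φ c = a := by
  have hc := hmaps (left_mem_Icc.mpr hce)
  obtain ⟨t, ht, hta⟩ := hsurj (left_mem_Icc.mpr (hc.1.trans hc.2))
  exact le_antisymm (hta ▸ hmono (left_mem_Icc.mpr hce) ht ht.1) hc.1

theorem MonotoneOn.apply_right_eq_of_surjOn (hmono : MonotoneOn φ (Icc c e))
    (hmaps : MapsTo φ (Icc c e) (Icc a b)) (hsurj : SurjOn φ (Icc c e) (Icc a b))
    (hce : c ≤ e) : φ e = b := by
  have he := hmaps (right_mem_Icc.mpr hce)
  obtain ⟨t, ht, htb⟩ := hsurj (right_mem_Icc.mpr (he.1.trans he.2))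
  exact le_antisymm he.2 (htb ▸ hmono ht (right_mem_Icc.mpr hce) ht.2)

end MonotoneEndpoints

theorem signature_reparameterisation_invariance_general {d : ℕ} (a b c e : ℝ)
    (hce : c ≤ e)
    (x : ℝ → Fin d → ℝ) (hx : ContDiffOn ℝ 1 x (Set.Icc a b))
    (φ : ℝ → ℝ) (hφ : ContDiffOn ℝ 1 φ (Set.Icc c e))
    (hφmono : StrictMonoOn φ (Set.Icc c e))
    (hφbij : Set.BijOn φ (Set.Icc c e) (Set.Icc a b)) :
    ∀ w : List (Fin d),
      sigCoord (fun t => x (φ t)) e w c = sigCoord x b w a := by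
  have hc : φ c = a :=
    hφmono.monotoneOn.apply_left_eq_of_surjOn hφbij.mapsTo hφbij.surjOn hce
  have he : φ e = b :=
    hφmono.monotoneOn.apply_right_eq_of_surjOn hφbij.mapsTo hφbij.surjOn hce
  have hmapsIoo : MapsTo φ (Ioo c e) (Ioo a b) := fun t ht =>
    ⟨hc ▸ hφmono (left_mem_Icc.mpr hce) (Ioo_subset_Icc_self ht) ht.1,
      he ▸ hφmono (Ioo_subset_Icc_self ht) (right_mem_Icc.mpr hce) ht.2⟩
  intro w
  rw [sigCoord_comp_of_mapsTo hx hφ hφbij.mapsTo hmapsIoo he w c (left_mem_Icc.mpr hce), hc]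

/-- **Reparameterisation invariance of the signature.**  Let `x` be a C¹ path
on `[a, b]` and let `φ : [c, e] → [a, b]` be a C¹, strictly increasing
bijection.  Then for every `k ≥ 0`, `S(x ∘ φ)^{(k)}_{[c,e]} = S(x)^{(k)}_{[a,b]}`:
in coordinates, the signature coordinates of `x ∘ φ` over `[c, e]` and of `x`
over `[a, b]` agree for every word `w`. -/
theorem signature_reparameterisation_invariance {d : ℕ} (a b c e : ℝ)
    (hab : a ≤ b) (hce : c ≤ e)
    (x : ℝ → Fin d → ℝ) (hx : ContDiffOn ℝ 1 x (Set.Icc a b))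
    (φ : ℝ → ℝ) (hφ : ContDiffOn ℝ 1 φ (Set.Icc c e))
    (hφmono : StrictMonoOn φ (Set.Icc c e))
    (hφbij : Set.BijOn φ (Set.Icc c e) (Set.Icc a b)) :
    ∀ w : List (Fin d),
      sigCoord (fun t => x (φ t)) e w c = sigCoord x b w a :=
  signature_reparameterisation_invariance_general a b c e hce x hx φ hφ hφmono hφbij
end

section
/- (Adjoint recurrence for the intermediate sensitivities.) In the setting of the signature-kernel finite-difference scheme, fix L₁, L₂ ≥ 1 and Δ ∈ ℝ^{L₁ × L₂}, let A(p) = 1 + p/2 + p²/12 and B(p) = 1 − p²/12, and let k̂ be defined by k̂_{i,0} = k̂_{0,j} = 1 and k̂_{i+1,j+1} = (k̂_{i+1,j} + k̂_{i,j+1})·A(Δ_{i,j}) − k̂_{i,j}·B(Δ_{i,j}). For 1 ≤ i ≤ L₁ and 1 ≤ j ≤ L₂, regard k̂_{L₁,L₂} as a function of the single intermediate value k̂_{i,j} by the following construction: introduce a perturbation parameter ε, set k̂^ε_{a,b} = k̂_{a,b} for all grid points (a,b) that are not ≥ (i,j) componentwise, set k̂^ε_{i,j} = k̂_{i,j} +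 ε, and propagate the recurrence forward for all (a,b) with a ≥ i, b ≥ j, (a,b) ≠ (i,j). Define h_{i,j} = d/dε|_{ε=0} k̂^ε_{L₁,L₂}. Then h_{L₁,L₂} = 1 and for (i,j) ≠ (L₁,L₂): h_{i,j} = h_{i+1,j}·A(Δ_{i,j−1}) + h_{i,j+1}·A(Δ_{i−1,j}) − h_{i+1,j+1}·B(Δ_{i,j}), where h_{a,b} is taken to be 0 whenever a > L₁ or b > L₂ (and any summand containing such a factor is omitted, so out-of-range Δ-indices never contribute). -/
/-- `Afun p = 1 + p/2 + p²/12`, the first coefficient of the second-order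
finite-difference scheme for the signature-kernel Goursat PDE. -/
noncomputable def Afun (p : ℝ) : ℝ := 1 + p / 2 + p ^ 2 / 12

/-- `Bfun p = 1 - p²/12`, the second coefficient of the second-order
finite-difference scheme for the signature-kernel Goursat PDE. -/
noncomputable def Bfun (p : ℝ) : ℝ := 1 - p ^ 2 / 12

/-- The finite-difference grid `k̂` for the signature-kernel Goursat PDE:
boundary values `k̂_{i,0} = k̂_{0,j} = 1` and recurrence
`k̂_{i+1,j+1} = (k̂_{i+1,j} + k̂_{i,j+1})·A(Δ_{i,j}) − k̂_{i,j}·B(Δ_{i,j})`. -/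
noncomputable def khat (Δ : ℕ → ℕ → ℝ) : ℕ → ℕ → ℝ
  | _, 0 => 1
  | 0, _ + 1 => 1
  | i + 1, j + 1 =>
      (khat Δ (i + 1) j + khat Δ i (j + 1)) * Afun (Δ i j) -
        khat Δ i j * Bfun (Δ i j)

/-- The grid obtained from `k̂` by perturbing the single intermediate value at
position `(i, j)` (with `1 ≤ i`, `1 ≤ j`) by `ε` and propagating the
recurrence forward: `k̂^ε_{a,b} = k̂_{a,b}` for grid points `(a,b)` that are not
componentwise `≥ (i,j)`, `k̂^ε_{i,j} = k̂_{i,j} + ε`, and for `(a,b)` with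
`a ≥ i`, `b ≥ j`, `(a,b) ≠ (i,j)` the recurrence
`k̂^ε_{a,b} = (k̂^ε_{a,b−1} + k̂^ε_{a−1,b})·A(Δ_{a−1,b−1}) − k̂^ε_{a−1,b−1}·B(Δ_{a−1,b−1})`. -/
noncomputable def khatPert (Δ : ℕ → ℕ → ℝ) (i j : ℕ) (ε : ℝ) (a b : ℕ) : ℝ :=
  if a = i ∧ b = j then khat Δ i j + ε
  else if i ≤ a ∧ j ≤ b ∧ 1 ≤ a ∧ 1 ≤ b then
    (khatPert Δ i j ε a (b - 1) + khatPert Δ i j ε (a - 1) b) *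
        Afun (Δ (a - 1) (b - 1)) -
      khatPert Δ i j ε (a - 1) (b - 1) * Bfun (Δ (a - 1) (b - 1))
  else khat Δ a b
termination_by a + b
decreasing_by all_goals omega

/-- The intermediate sensitivity `h_{i,j} = d/dε|_{ε=0} k̂^ε_{L₁,L₂}`: the
derivative of the final grid value with respect to a perturbation of the
intermediate grid value `k̂_{i,j}`. -/
noncomputable def hSens (Δ : ℕ → ℕ → ℝ) (L₁ L₂ : ℕ) (i j : ℕ) : ℝ :=
  deriv (fun ε : ℝ => khatPert Δ i j ε L₁ L₂) 0

/-!
Write `D f` for the defect of a grid `f` in the scheme: `f` minus the right-hand side of the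
recurrence, and `f` itself on the boundary. `D` is linear and unitriangular for the order
`a + b`, hence injective. Perturbing `k̂_{i,j}` by `ε` changes the defect of `k̂` by `ε` at `(i,j)`
only, so `k̂^ε = k̂ + ε g_{i,j}` with `D g_{i,j} = δ_{i,j}`, and `h_{i,j} = g_{i,j}(L₁,L₂)`.
On the other hand `D δ_{i,j} = δ_{i,j} − A(Δ_{i,j−1}) δ_{i+1,j} − A(Δ_{i−1,j}) δ_{i,j+1} +
B(Δ_{i,j}) δ_{i+1,j+1}`, so injectivity of `D` gives
`g_{i,j} − δ_{i,j} = A(Δ_{i,j−1}) g_{i+1,j} + A(Δ_{i−1,j}) g_{i,j+1} − B(Δ_{i,j}) g_{i+1,j+1}`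
on the whole grid, which at `(L₁,L₂) ≠ (i,j)` is the adjoint recurrence.
-/

noncomputable def schemeDefect (Δ : ℕ → ℕ → ℝ) : (ℕ → ℕ → ℝ) →ₗ[ℝ] ℕ → ℕ → ℝ where
  toFun f := fun
    | a + 1, b + 1 =>
        f (a + 1) (b + 1) - ((f (a + 1) b + f a (b + 1)) * Afun (Δ a b) - f a b * Bfun (Δ a b))
    | a, b => f a b
  map_add' f g := by
    ext (_ | a) (_ | b) <;> simp only [Pi.add_apply]
    ring
  map_smul' c f := by
    ext (_ | a) (_ | b) <;> simp only [Pi.smul_apply, smul_eq_mul, RingHom.id_apply]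
    ring

section schemeDefect

variable (Δ : ℕ → ℕ → ℝ) (f : ℕ → ℕ → ℝ)

@[simp] lemma schemeDefect_zero_left (b : ℕ) : schemeDefect Δ f 0 b = f 0 b := rfl

@[simp] lemma schemeDefect_zero_right (a : ℕ) : schemeDefect Δ f a 0 = f a 0 := by
  cases a <;> rfl

lemma schemeDefect_succ_succ (a b : ℕ) :
    schemeDefect Δ f (a + 1) (b + 1) =
      f (a + 1) (b + 1) - ((f (a + 1) b + f a (b + 1)) * Afun (Δ a b) - f a b * Bfun (Δ a b)) :=
  rfl

end schemeDefect

lemma schemeDefect_injective (Δ : ℕ → ℕ → ℝ) : Function.Injective (schemeDefect Δ) := by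
  refine (injective_iff_map_eq_zero _).2 fun f hf => ?_
  have hf' : ∀ a b, schemeDefect Δ f a b = 0 := fun a b => congrFun (congrFun hf a) b
  funext a
  induction a with
  | zero => funext b; simpa using hf' 0 b
  | succ a iha =>
    funext b
    induction b with
    | zero => simpa using hf' (a + 1) 0
    | succ b ihb =>
      have := hf' (a + 1) (b + 1)
      rw [schemeDefect_succ_succ, ihb, iha] at this
      simpa using this

def gridSingle (i j : ℕ) : ℕ → ℕ → ℝ := fun a b => if a = i ∧ b = j then 1 else 0

section khatPert

variable (Δ : ℕ → ℕ → ℝ) (i j : ℕ) (ε : ℝ)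

lemma khat_succ_succ (a b : ℕ) :
    khat Δ (a + 1) (b + 1) =
      (khat Δ (a + 1) b + khat Δ a (b + 1)) * Afun (Δ a b) - khat Δ a b * Bfun (Δ a b) := by
  rw [khat]

lemma khatPert_self : khatPert Δ i j ε i j = khat Δ i j + ε := by
  rw [khatPert, if_pos ⟨rfl, rfl⟩]

lemma khatPert_eq_khat {a b : ℕ} (hne : ¬(a = i ∧ b = j))
    (h : ¬(i ≤ a ∧ j ≤ b ∧ 1 ≤ a ∧ 1 ≤ b)) : khatPert Δ i j ε a b = khat Δ a b := by
  rw [khatPert, if_neg hne, if_neg h]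

lemma khatPert_succ_succ {a b : ℕ} (hne : ¬(a + 1 = i ∧ b + 1 = j)) (hi : i ≤ a + 1)
    (hj : j ≤ b + 1) :
    khatPert Δ i j ε (a + 1) (b + 1) =
      (khatPert Δ i j ε (a + 1) b + khatPert Δ i j ε a (b + 1)) * Afun (Δ a b) -
        khatPert Δ i j ε a b * Bfun (Δ a b) := by
  rw [khatPert, if_neg hne, if_pos (by omega)]
  simp only [Nat.add_sub_cancel]

lemma schemeDefect_khatPert_sub_khat :
    schemeDefect Δ (khatPert Δ i j ε - khat Δ) = ε • gridSingle i j := by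
  have boundary : ∀ a b, ¬(1 ≤ a ∧ 1 ≤ b) →
      khatPert Δ i j ε a b - khat Δ a b = ε * gridSingle i j a b := by
    intro a b hab
    by_cases he : a = i ∧ b = j
    · obtain ⟨rfl, rfl⟩ := he
      simp [khatPert_self, gridSingle]
    · simp [khatPert_eq_khat Δ i j ε he (by omega), gridSingle, he]
  ext (_ | a) (_ | b)
  · simpa using boundary 0 0 (by omega)
  · simpa using boundary 0 (b + 1) (by omega)
  · simpa using boundary (a + 1) 0 (by omega)
  rw [schemeDefect_succ_succ]
  simp only [Pi.sub_apply, Pi.smul_apply, smul_eq_mul, gridSingle]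
  by_cases hself : a + 1 = i ∧ b + 1 = j
  · obtain ⟨rfl, rfl⟩ := hself
    rw [khatPert_self, khatPert_eq_khat Δ _ _ ε (by omega) (by omega),
      khatPert_eq_khat Δ _ _ ε (by omega) (by omega),
      khatPert_eq_khat Δ _ _ ε (by omega) (by omega),
      khat_succ_succ]
    simp only [and_self, if_true]
    ring
  rw [if_neg hself]
  by_cases hle : i ≤ a + 1 ∧ j ≤ b + 1
  · rw [khatPert_succ_succ Δ i j ε hself hle.1 hle.2, khat_succ_succ]
    ring
  · rw [khatPert_eq_khat Δ i j ε hself (by omega), khatPert_eq_khat Δ i j ε (by omega) (by omega),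
      khatPert_eq_khat Δ i j ε (by omega) (by omega),
      khatPert_eq_khat Δ i j ε (by omega) (by omega)]
    ring

end khatPert

lemma schemeDefect_gridSingle (Δ : ℕ → ℕ → ℝ) {i j : ℕ} (hi : 1 ≤ i) (hj : 1 ≤ j) :
    schemeDefect Δ (gridSingle i j) =
      gridSingle i j - Afun (Δ i (j - 1)) • gridSingle (i + 1) j -
        Afun (Δ (i - 1) j) • gridSingle i (j + 1) + Bfun (Δ i j) • gridSingle (i + 1) (j + 1) := by
  obtain ⟨i, rfl⟩ := Nat.exists_eq_add_of_le' hi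
  obtain ⟨j, rfl⟩ := Nat.exists_eq_add_of_le' hj
  ext (_ | a) (_ | b)
  all_goals
    simp only [schemeDefect_zero_left, schemeDefect_zero_right, schemeDefect_succ_succ,
      Pi.add_apply, Pi.sub_apply, Pi.smul_apply, smul_eq_mul, gridSingle]
    split_ifs <;> (try omega) <;> simp_all

/-- `khatTangent Δ i j a b = ∂k̂_{a,b}/∂k̂_{i,j}`, since `khatPert` is affine in `ε`. -/
noncomputable def khatTangent (Δ : ℕ → ℕ → ℝ) (i j : ℕ) : ℕ → ℕ → ℝ :=
  khatPert Δ i j 1 - khat Δ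

section khatTangent

variable (Δ : ℕ → ℕ → ℝ) (i j : ℕ)

lemma khatTangent_self : khatTangent Δ i j i j = 1 := by
  simp [khatTangent, khatPert_self]

lemma khatTangent_eq_zero_of_not_le {a b : ℕ} (h : ¬(i ≤ a ∧ j ≤ b)) :
    khatTangent Δ i j a b = 0 := by
  simp [khatTangent, khatPert_eq_khat Δ i j 1 (a := a) (b := b) (by omega) (by omega)]

lemma schemeDefect_khatTangent : schemeDefect Δ (khatTangent Δ i j) = gridSingle i j := by
  simpa only [khatTangent, one_smul] using schemeDefect_khatPert_sub_khat Δ i j 1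

lemma khatPert_eq_add_smul_khatTangent (ε : ℝ) :
    khatPert Δ i j ε = khat Δ + ε • khatTangent Δ i j := by
  have h : khatPert Δ i j ε - khat Δ = ε • khatTangent Δ i j :=
    schemeDefect_injective Δ <| by
      rw [map_smul, schemeDefect_khatTangent, schemeDefect_khatPert_sub_khat]
  rw [← h, add_sub_cancel]

lemma hSens_eq_khatTangent (L₁ L₂ : ℕ) : hSens Δ L₁ L₂ i j = khatTangent Δ i j L₁ L₂ := by
  simp only [hSens, khatPert_eq_add_smul_khatTangent, Pi.add_apply, Pi.smul_apply, smul_eq_mul]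
  exact (((hasDerivAt_id 0).mul_const _).const_add _).deriv.trans (one_mul _)

lemma khatTangent_sub_gridSingle (hi : 1 ≤ i) (hj : 1 ≤ j) :
    khatTangent Δ i j - gridSingle i j =
      Afun (Δ i (j - 1)) • khatTangent Δ (i + 1) j + Afun (Δ (i - 1) j) • khatTangent Δ i (j + 1) -
        Bfun (Δ i j) • khatTangent Δ (i + 1) (j + 1) :=
  schemeDefect_injective Δ <| by
    simp only [map_sub, map_add, map_smul, schemeDefect_khatTangent,
      schemeDefect_gridSingle Δ hi hj]
    module

end khatTangent

theorem adjoint_recurrence_for_sensitivities_general (L₁ L₂ : ℕ) (Δ : ℕ → ℕ → ℝ) :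
    hSens Δ L₁ L₂ L₁ L₂ = 1 ∧
    ∀ i j : ℕ, 1 ≤ i → i ≤ L₁ → 1 ≤ j → j ≤ L₂ → ¬(i = L₁ ∧ j = L₂) →
      hSens Δ L₁ L₂ i j =
        (if L₁ < i + 1 then 0 else hSens Δ L₁ L₂ (i + 1) j) * Afun (Δ i (j - 1)) +
        (if L₂ < j + 1 then 0 else hSens Δ L₁ L₂ i (j + 1)) * Afun (Δ (i - 1) j) -
        (if L₁ < i + 1 ∨ L₂ < j + 1 then 0 else hSens Δ L₁ L₂ (i + 1) (j + 1)) *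
          Bfun (Δ i j) := by
  refine ⟨(hSens_eq_khatTangent Δ _ _ _ _).trans (khatTangent_self Δ _ _), ?_⟩
  intro i j hi _ hj _ hne
  have out_of_range : ∀ {p q : ℕ} {P : Prop} [Decidable P], (P → ¬(p ≤ L₁ ∧ q ≤ L₂)) →
      (if P then 0 else hSens Δ L₁ L₂ p q) = khatTangent Δ p q L₁ L₂ := by
    intro p q P _ hP
    split_ifs with h
    · exact (khatTangent_eq_zero_of_not_le Δ p q (hP h)).symm
    · exact hSens_eq_khatTangent Δ p q L₁ L₂
  have adjoint := congrFun (congrFun (khatTangent_sub_gridSingle Δ i j hi hj) L₁) L₂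
  simp only [Pi.sub_apply, Pi.add_apply, Pi.smul_apply, smul_eq_mul, gridSingle,
    if_neg (fun h : L₁ = i ∧ L₂ = j => hne ⟨h.1.symm, h.2.symm⟩), sub_zero] at adjoint
  rw [hSens_eq_khatTangent, adjoint, out_of_range (by omega), out_of_range (by omega),
    out_of_range (by omega)]
  ring

/-- **Adjoint recurrence for the intermediate sensitivities.**  With `k̂` the
finite-difference grid for `Δ ∈ ℝ^{L₁ × L₂}` and `h_{i,j}` the sensitivity of
`k̂_{L₁,L₂}` to a perturbation of the intermediate value `k̂_{i,j}`, one has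
`h_{L₁,L₂} = 1` and, for `1 ≤ i ≤ L₁`, `1 ≤ j ≤ L₂` with `(i,j) ≠ (L₁,L₂)`,
`h_{i,j} = h_{i+1,j}·A(Δ_{i,j−1}) + h_{i,j+1}·A(Δ_{i−1,j}) − h_{i+1,j+1}·B(Δ_{i,j})`,
where `h_{a,b}` is taken to be `0` whenever `a > L₁` or `b > L₂` (so that any
summand containing such a factor is omitted and out-of-range `Δ`-indices never
contribute). -/
theorem adjoint_recurrence_for_sensitivities (L₁ L₂ : ℕ) (hL₁ : 1 ≤ L₁)
    (hL₂ : 1 ≤ L₂) (Δ : ℕ → ℕ → ℝ) :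
    hSens Δ L₁ L₂ L₁ L₂ = 1 ∧
    ∀ i j : ℕ, 1 ≤ i → i ≤ L₁ → 1 ≤ j → j ≤ L₂ → ¬(i = L₁ ∧ j = L₂) →
      hSens Δ L₁ L₂ i j =
        (if L₁ < i + 1 then 0 else hSens Δ L₁ L₂ (i + 1) j) * Afun (Δ i (j - 1)) +
        (if L₂ < j + 1 then 0 else hSens Δ L₁ L₂ i (j + 1)) * Afun (Δ (i - 1) j) -
        (if L₁ < i + 1 ∨ L₂ < j + 1 then 0 else hSens Δ L₁ L₂ (i + 1) (j + 1)) *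
          Bfun (Δ i j) :=
  adjoint_recurrence_for_sensitivities_general L₁ L₂ Δ
end
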